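/- Let 0 < α < 1/2. On a probability space let (ξ(n))_{n≥1} be i.i.d. with ℙ(ξ(1)=1) = ℙ(ξ(1)=−1) = 1/2, and let (ψ(n))_{n≥1} be i.i.d. nonnegative-integer-valued random variables, independent of (ξ(n)), satisfying k^α · ℙ(ψ(1) > k) → 1 as k → ∞. Define X₂(0) = 0, X₂(n) = max{0, X₂(n−1) + ξ(n)} for n ≥ 1, and X₁(0) = 0, X₁(n) = max{0, X₁(n−1) + η(n)} for n ≥ 1, where η(n) = −1 if X₂(n−1) > 0 and η(n) = ψ(n) if X₂(n−1) = 0. Then X₁(n) → ∞ almost surely as n → ∞. -/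

import Mathlib

open MeasureTheory Filter Topology ProbabilityTheory
open Finset
open scoped ENNReal

/-- The simple random walk on `ℤ₊` reflected at `0`, started from `0`, driven by the
steps `ξ(1), ξ(2), …` : `X₂(0) = 0` and `X₂(n) = max{0, X₂(n-1) + ξ(n)}`. -/
noncomputable def reflWalk {Ω : Type*} (ξ : ℕ → Ω → ℤ) : ℕ → Ω → ℕ
  | 0 => fun _ => 0
  | n + 1 => fun ω => ((reflWalk ξ n ω : ℤ) + ξ (n + 1) ω).toNat

/-- The process `X₁` of the counterexample: `X₁(0) = 0` and
`X₁(n) = max{0, X₁(n-1) + η(n)}`, where `η(n) = -1` if `X₂(n-1) > 0` and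
`η(n) = ψ(n)` if `X₂(n-1) = 0`. -/
noncomputable def auxQueue {Ω : Type*} (ξ : ℕ → Ω → ℤ) (ψ : ℕ → Ω → ℕ) : ℕ → Ω → ℕ
  | 0 => fun _ => 0
  | n + 1 => fun ω => ((auxQueue ξ ψ n ω : ℤ) +
      (if 0 < reflWalk ξ n ω then (-1 : ℤ) else (ψ (n + 1) ω : ℤ))).toNat

namespace AFSW

def bval (b : Bool) : ℤ := if b then 1 else -1

def pS (u : ℕ → Bool) (m : ℕ) : ℤ := ∑ k ∈ Finset.range m, bval (u k)

def extb {n : ℕ} (v : Fin n → Bool) : ℕ → Bool := fun k => if h : k < n then v ⟨k, h⟩ else false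

lemma pS_zero (u : ℕ → Bool) : pS u 0 = 0 := by simp [pS]

lemma pS_succ (u : ℕ → Bool) (m : ℕ) : pS u (m+1) = pS u m + bval (u m) := by
  simp [pS, Finset.sum_range_succ]

lemma extb_eq {n : ℕ} (v : Fin n → Bool) (k : ℕ) (h : k < n) : extb v k = v ⟨k, h⟩ := by
  simp [extb, h]

lemma pS_peel {n : ℕ} (v : Fin (n+1) → Bool) (m : ℕ) (hm : m ≤ n) :
    pS (extb v) (m+1) = bval (v 0) + pS (extb (Fin.tail v)) m := by
  rw [pS, Finset.sum_range_succ']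
  have h0 : extb v 0 = v 0 := extb_eq v 0 (Nat.succ_pos n)
  rw [h0, add_comm, pS]
  congr 1
  apply Finset.sum_congr rfl
  intro k hk
  have hk' : k < m := Finset.mem_range.mp hk
  have h1 : k + 1 < n + 1 := by omega
  have h2 : k < n := by omega
  rw [extb_eq v (k+1) h1, extb_eq _ k h2]
  rfl

/-- generic peeling of the first coordinate for counting -/
lemma card_split {n : ℕ} (p : (Fin (n+1) → Bool) → Prop) (q₁ q₂ : (Fin n → Bool) → Prop)
    [DecidablePred p] [DecidablePred q₁] [DecidablePred q₂]
    (h1 : ∀ v, v 0 = true → (p v ↔ q₁ (Fin.tail v)))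
    (h2 : ∀ v, v 0 = false → (p v ↔ q₂ (Fin.tail v))) :
    (Finset.univ.filter p).card
      = (Finset.univ.filter q₁).card + (Finset.univ.filter q₂).card := by
  classical
  have hsplit := Finset.card_filter_add_card_filter_not
    (s := Finset.univ.filter p) (p := fun v => v 0 = true)
  rw [Finset.filter_filter, Finset.filter_filter] at hsplit
  have e1 : (Finset.univ.filter (fun v : Fin (n+1) → Bool => p v ∧ v 0 = true)).card
      = (Finset.univ.filter q₁).card := by
    refine Finset.card_bij' (fun v _ => Fin.tail v) (fun w _ => Fin.cons true w)
      ?_ ?_ ?_ ?_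
    · intro v hv
      simp only [Finset.mem_filter, Finset.mem_univ, true_and] at hv ⊢
      exact (h1 v hv.2).mp hv.1
    · intro w hw
      simp only [Finset.mem_filter, Finset.mem_univ, true_and] at hw ⊢
      refine ⟨?_, Fin.cons_zero _ _⟩
      rw [h1 _ (Fin.cons_zero _ _), Fin.tail_cons]; exact hw
    · intro v hv
      simp only [Finset.mem_filter, Finset.mem_univ, true_and] at hv
      show Fin.cons true (Fin.tail v) = v
      have h := Fin.cons_self_tail v
      rwa [hv.2] at h
    · intro w _
      exact Fin.tail_cons _ _
  have e2 : (Finset.univ.filter (fun v : Fin (n+1) → Bool => p v ∧ ¬ (v 0 = true))).card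
      = (Finset.univ.filter q₂).card := by
    refine Finset.card_bij' (fun v _ => Fin.tail v) (fun w _ => Fin.cons false w)
      ?_ ?_ ?_ ?_
    · intro v hv
      simp only [Finset.mem_filter, Finset.mem_univ, true_and] at hv ⊢
      exact (h2 v (by simpa using hv.2)).mp hv.1
    · intro w hw
      simp only [Finset.mem_filter, Finset.mem_univ, true_and] at hw ⊢
      refine ⟨?_, by simp [Fin.cons_zero]⟩
      rw [h2 _ (Fin.cons_zero _ _), Fin.tail_cons]; exact hw
    · intro v hv
      simp only [Finset.mem_filter, Finset.mem_univ, true_and] at hv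
      have hv0 : v 0 = false := by simpa using hv.2
      show Fin.cons false (Fin.tail v) = v
      have h := Fin.cons_self_tail v
      rwa [hv0] at h
    · intro w _
      exact Fin.tail_cons _ _
  rw [← hsplit, e1, e2]

open Classical in
noncomputable def Aset (n c : ℕ) : Finset (Fin n → Bool) :=
  Finset.univ.filter (fun v => ∀ m ≤ n, -(c:ℤ) < pS (extb v) m)

open Classical in
noncomputable def Eset (n : ℕ) (j : ℤ) : Finset (Fin n → Bool) :=
  Finset.univ.filter (fun v => pS (extb v) n = j)

lemma card_Eset_succ (n : ℕ) (j : ℤ) :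
    (Eset (n+1) j).card = (Eset n (j-1)).card + (Eset n (j+1)).card := by
  classical
  unfold Eset
  rw [Finset.filter_congr_decidable, Finset.filter_congr_decidable, Finset.filter_congr_decidable]
  apply card_split
  · intro v hv
    rw [pS_peel v n le_rfl, hv]
    rw [show bval true = 1 from rfl]
    omega
  · intro v hv
    rw [pS_peel v n le_rfl, hv]
    rw [show bval false = -1 from rfl]
    omega

lemma Aset_zero_c (n : ℕ) : (Aset n 0).card = 0 := by
  rw [Finset.card_eq_zero]
  ext v
  simp only [Aset, Finset.mem_filter, Finset.mem_univ, true_and, Finset.notMem_empty, iff_false]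
  intro h
  have := h 0 (Nat.zero_le n)
  rw [pS_zero] at this
  omega

lemma card_Aset_succ (n c : ℕ) (hc : 1 ≤ c) :
    (Aset (n+1) c).card = (Aset n (c+1)).card + (Aset n (c-1)).card := by
  classical
  unfold Aset
  rw [Finset.filter_congr_decidable, Finset.filter_congr_decidable, Finset.filter_congr_decidable]
  apply card_split
  · intro v hv
    constructor
    · intro h m hm
      have := h (m+1) (by omega)
      rw [pS_peel v m hm, hv] at this
      have hb : bval true = 1 := rfl
      rw [hb] at this
      push_cast
      omega
    · intro h m hm
      match m with
      | 0 => rw [pS_zero]; push_cast; omega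
      | m+1 =>
        rw [pS_peel v m (by omega), hv, show bval true = 1 from rfl]
        have := h m (by omega)
        push_cast at this ⊢
        omega
  · intro v hv
    constructor
    · intro h m hm
      have := h (m+1) (by omega)
      rw [pS_peel v m hm, hv, show bval false = -1 from rfl] at this
      push_cast [Nat.cast_sub hc]
      omega
    · intro h m hm
      match m with
      | 0 => rw [pS_zero]; push_cast; omega
      | m+1 =>
        rw [pS_peel v m (by omega), hv, show bval false = -1 from rfl]
        have := h m (by omega)
        push_cast [Nat.cast_sub hc] at this ⊢
        omega

noncomputable def Rsum (n c : ℕ) : ℕ :=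
  ∑ r ∈ Finset.range (2*c), (Eset n ((r:ℤ) + 1 - c)).card

lemma Eset_zero_zero : (Eset 0 (0:ℤ)).card = 1 := by
  rw [Eset, Finset.filter_true_of_mem (fun v _ => pS_zero _)]
  simp

lemma Rsum_succ (n c : ℕ) (hc : 1 ≤ c) : Rsum (n+1) c = Rsum n (c+1) + Rsum n (c-1) := by
  have key : ∀ r : ℕ, (Eset (n+1) ((r:ℤ) + 1 - c)).card
      = (Eset n ((r:ℤ) - c)).card + (Eset n ((r:ℤ) + 2 - c)).card := by
    intro r
    rw [card_Eset_succ]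
    congr 2 <;> ring
  have h1 : Rsum (n+1) c
      = (∑ r ∈ Finset.range (2*c), (Eset n ((r:ℤ) - c)).card)
        + (∑ r ∈ Finset.range (2*c), (Eset n ((r:ℤ) + 2 - c)).card) := by
    rw [Rsum, Finset.sum_congr rfl (fun r _ => key r), Finset.sum_add_distrib]
  have h2 : Rsum n (c+1) = (∑ r ∈ Finset.range (2*c), (Eset n ((r:ℤ) - c)).card)
      + ((Eset n (c:ℤ)).card + (Eset n ((c:ℤ)+1)).card) := by
    rw [Rsum, show 2*(c+1) = (2*c) + 1 + 1 by ring, Finset.sum_range_succ,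
      Finset.sum_range_succ]
    have e0 : ∀ r : ℕ, (Eset n ((r:ℤ) + 1 - ((c+1:ℕ):ℤ))).card = (Eset n ((r:ℤ) - c)).card := by
      intro r; congr 1; push_cast; ring
    rw [Finset.sum_congr rfl (fun r _ => e0 r), e0 (2*c), e0 (2*c+1)]
    have e1 : ((2*c : ℕ) : ℤ) - c = (c:ℤ) := by push_cast; ring
    have e2 : ((2*c+1 : ℕ) : ℤ) - c = (c:ℤ)+1 := by push_cast; ring
    rw [e1, e2, add_assoc]
  have h3 : (∑ r ∈ Finset.range (2*c), (Eset n ((r:ℤ) + 2 - c)).card)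
      = Rsum n (c-1) + ((Eset n (c:ℤ)).card + (Eset n ((c:ℤ)+1)).card) := by
    rw [Rsum, show 2*c = (2*(c-1)) + 1 + 1 by omega, Finset.sum_range_succ,
      Finset.sum_range_succ]
    have e0 : ∀ r : ℕ, (Eset n ((r:ℤ) + 1 - (c-1:ℕ))).card = (Eset n ((r:ℤ) + 2 - c)).card := by
      intro r; congr 1; push_cast [Nat.cast_sub hc]; ring
    rw [Finset.sum_congr rfl (fun r _ => e0 r)]
    have e1 : ((2*(c-1) : ℕ) : ℤ) + 2 - c = (c:ℤ) := by push_cast [Nat.cast_sub hc]; ring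
    have e2 : ((2*(c-1)+1 : ℕ) : ℤ) + 2 - c = (c:ℤ)+1 := by push_cast [Nat.cast_sub hc]; ring
    rw [e1, e2, add_assoc]
  omega

lemma card_Aset_le_Rsum (n : ℕ) : ∀ c : ℕ, (Aset n c).card ≤ Rsum n c := by
  induction n with
  | zero =>
    intro c
    match c with
    | 0 => simp [Aset_zero_c]
    | c+1 =>
      have h1 : (Aset 0 (c+1)).card ≤ 1 := by
        refine le_trans (Finset.card_le_card (Finset.filter_subset _ _)) ?_
        simp
      refine le_trans h1 ?_
      have hmem : c ∈ Finset.range (2*(c+1)) := by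
        rw [Finset.mem_range]; omega
      have hval : (Eset 0 ((c:ℤ) + 1 - ((c+1:ℕ):ℤ))).card = 1 := by
        have h0 : ((c:ℤ) + 1 - ((c+1:ℕ):ℤ)) = 0 := by push_cast; ring
        rw [h0, Eset_zero_zero]
      rw [Rsum]
      calc 1 = (Eset 0 ((c:ℤ) + 1 - ((c+1:ℕ):ℤ))).card := hval.symm
        _ ≤ ∑ r ∈ Finset.range (2*(c+1)), (Eset 0 ((r:ℤ) + 1 - ((c+1:ℕ):ℤ))).card :=
          Finset.single_le_sum (f := fun r : ℕ => (Eset 0 ((r:ℤ) + 1 - ((c+1:ℕ):ℤ))).card)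
            (fun _ _ => Nat.zero_le _) hmem
  | succ n ih =>
    intro c
    match c with
    | 0 => simp [Aset_zero_c]
    | c+1 =>
      rw [card_Aset_succ n (c+1) (by omega), Rsum_succ n (c+1) (by omega)]
      exact Nat.add_le_add (ih (c+2)) (ih c)

lemma pS_extb_full {n : ℕ} (v : Fin n → Bool) :
    pS (extb v) n = 2*((Finset.univ.filter (fun k => v k = true)).card : ℤ) - n := by
  classical
  rw [pS, Finset.sum_range]
  have h1 : ∀ k : Fin n, bval (extb v (k:ℕ)) = bval (v k) := by
    intro k
    rw [extb_eq v k k.isLt]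
  rw [Finset.sum_congr rfl (fun k _ => h1 k)]
  have h2 : ∀ k : Fin n, bval (v k) = if v k = true then (1:ℤ) else -1 := by
    intro k; cases hv : v k <;> simp [bval]
  rw [Finset.sum_congr rfl (fun k _ => h2 k), Finset.sum_ite, Finset.sum_const,
    Finset.sum_const]
  have h3 := Finset.card_filter_add_card_filter_not
    (s := (Finset.univ : Finset (Fin n))) (p := fun k => v k = true)
  rw [Finset.card_univ, Fintype.card_fin] at h3
  rw [nsmul_eq_mul, nsmul_eq_mul]
  push_cast
  omega

lemma card_Eset_le (n : ℕ) (j : ℤ) : (Eset n j).card ≤ n.choose (n/2) := by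
  classical
  set T : ℕ := ((n:ℤ) + j).toNat / 2 with hT
  have hmaps : ∀ v ∈ Eset n j,
      (Finset.univ.filter (fun k => v k = true)) ∈ Finset.powersetCard T Finset.univ := by
    intro v hv
    rw [Eset, Finset.mem_filter] at hv
    have := pS_extb_full v
    rw [hv.2] at this
    rw [Finset.mem_powersetCard]
    refine ⟨Finset.subset_univ _, ?_⟩
    omega
  have hinj : Set.InjOn (fun v => (Finset.univ.filter (fun k => v k = true)))
      (Eset n j : Set (Fin n → Bool)) := by
    intro v _ v' _ h
    have h' : Finset.univ.filter (fun k => v k = true)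
        = Finset.univ.filter (fun k => v' k = true) := h
    funext k
    have hk : (k ∈ Finset.univ.filter (fun k => v k = true))
        ↔ (k ∈ Finset.univ.filter (fun k => v' k = true)) := by rw [h']
    simp only [Finset.mem_filter, Finset.mem_univ, true_and] at hk
    cases hv : v k <;> cases hv' : v' k <;> simp_all
  have := Finset.card_le_card_of_injOn _ hmaps hinj
  refine le_trans this ?_
  rw [Finset.card_powersetCard, Finset.card_univ, Fintype.card_fin]
  exact Nat.choose_le_middle T n

lemma centralBinom_sq_le (h : ℕ) : (Nat.centralBinom h)^2 * (h+1) ≤ 16^h := by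
  induction h with
  | zero => simp [Nat.centralBinom]
  | succ h ih =>
    have key := Nat.succ_mul_centralBinom_succ h
    set A := Nat.centralBinom (h+1) with hA
    set B := Nat.centralBinom h with hB
    have h4 : (h+1)^2*A^2 = 4*(2*h+1)^2*B^2 := by
      calc (h+1)^2*A^2 = ((h+1)*A)^2 := by ring
        _ = (2*(2*h+1)*B)^2 := by rw [key]
        _ = 4*(2*h+1)^2*B^2 := by ring
    have h5 : A^2*(h+1+1)*(h+1)^3 = (4*(2*h+1)^2*(h+2))*(B^2*(h+1)) := by
      calc A^2*(h+1+1)*(h+1)^3 = ((h+1)^2*A^2)*((h+2)*(h+1)) := by ring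
        _ = (4*(2*h+1)^2*B^2)*((h+2)*(h+1)) := by rw [h4]
        _ = _ := by ring
    have h6 : (4*(2*h+1)^2*(h+2))*(B^2*(h+1)) ≤ (16*(h+1)^3)*16^h :=
      Nat.mul_le_mul (by nlinarith) ih
    have h7 : A^2*(h+1+1)*(h+1)^3 ≤ 16^(h+1)*(h+1)^3 := by
      rw [h5]
      refine le_trans h6 (le_of_eq ?_)
      ring
    exact Nat.le_of_mul_le_mul_right h7 (by positivity)

lemma card_Aset_le_final (h c : ℕ) :
    (Aset (2*h) c).card ≤ 2*c*Nat.centralBinom h := by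
  refine le_trans (card_Aset_le_Rsum (2*h) c) ?_
  rw [Rsum]
  calc ∑ r ∈ Finset.range (2*c), (Eset (2*h) ((r:ℤ) + 1 - c)).card
      ≤ ∑ _r ∈ Finset.range (2*c), (2*h).choose ((2*h)/2) :=
        Finset.sum_le_sum (fun r _ => card_Eset_le (2*h) _)
    _ = 2*c*Nat.centralBinom h := by
        rw [Finset.sum_const, Finset.card_range, smul_eq_mul]
        congr 1
        rw [Nat.centralBinom]
        congr 1
        omega

section Walk
variable {Ω : Type*} (ξ : ℕ → Ω → ℤ) (ψ : ℕ → Ω → ℕ)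

/-- partial sums of the steps -/
def Sw (m : ℕ) (ω : Ω) : ℤ := ∑ k ∈ Finset.range m, ξ (k+1) ω

lemma Sw_zero (ω : Ω) : Sw ξ 0 ω = 0 := by simp [Sw]

lemma Sw_succ (m : ℕ) (ω : Ω) : Sw ξ (m+1) ω = Sw ξ m ω + ξ (m+1) ω := by
  simp [Sw, Finset.sum_range_succ]

/-- running minimum of the partial sums -/
def Mn (n : ℕ) (ω : Ω) : ℤ :=
  match n with
  | 0 => 0
  | n+1 => min (Mn n ω) (Sw ξ (n+1) ω)

lemma Mn_le (n : ℕ) (ω : Ω) : ∀ k ≤ n, Mn ξ n ω ≤ Sw ξ k ω := by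
  induction n with
  | zero =>
    intro k hk
    rw [Nat.le_zero.mp hk, Sw_zero]
    exact le_rfl
  | succ n ih =>
    intro k hk
    rcases Nat.lt_succ_iff_lt_or_eq.mp (Nat.lt_succ_of_le hk) with h | h
    · exact le_trans (min_le_left _ _) (ih k (by omega))
    · rw [h]
      exact min_le_right _ _

lemma Mn_attained (n : ℕ) (ω : Ω) : ∃ k ≤ n, Mn ξ n ω = Sw ξ k ω := by
  induction n with
  | zero => exact ⟨0, le_rfl, (Sw_zero ξ ω).symm⟩
  | succ n ih =>
    obtain ⟨k, hk, he⟩ := ih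
    rcases min_cases (Mn ξ n ω) (Sw ξ (n+1) ω) with ⟨h1, _⟩ | ⟨h1, _⟩
    · exact ⟨k, by omega, by rw [show Mn ξ (n+1) ω = min (Mn ξ n ω) (Sw ξ (n+1) ω) from rfl, h1, he]⟩
    · exact ⟨n+1, le_rfl, by rw [show Mn ξ (n+1) ω = min (Mn ξ n ω) (Sw ξ (n+1) ω) from rfl, h1]⟩

lemma reflWalk_lindley (n : ℕ) (ω : Ω) :
    (reflWalk ξ n ω : ℤ) = Sw ξ n ω - Mn ξ n ω := by
  induction n with
  | zero =>
    simp [reflWalk, Sw_zero, Mn]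
  | succ n ih =>
    have h1 : (reflWalk ξ (n+1) ω : ℤ)
        = ((reflWalk ξ n ω : ℤ) + ξ (n+1) ω).toNat := rfl
    have h3 : Mn ξ (n+1) ω = min (Mn ξ n ω) (Sw ξ (n+1) ω) := rfl
    have h4 := Sw_succ ξ n ω
    have h5 : ((((reflWalk ξ n ω : ℤ) + ξ (n+1) ω).toNat : ℤ))
        = max ((reflWalk ξ n ω : ℤ) + ξ (n+1) ω) 0 := Int.toNat_eq_max _
    omega

lemma reflWalk_eq_zero_of_min (n : ℕ) (ω : Ω)
    (h : ∀ k ≤ n, Sw ξ n ω ≤ Sw ξ k ω) : reflWalk ξ n ω = 0 := by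
  have h1 := reflWalk_lindley ξ n ω
  have h2 := Mn_le ξ n ω n le_rfl
  obtain ⟨k, hk, he⟩ := Mn_attained ξ n ω
  have h3 := h k hk
  omega

lemma auxQueue_step (n : ℕ) (ω : Ω) :
    auxQueue ξ ψ n ω ≤ auxQueue ξ ψ (n+1) ω + 1 := by
  have h1 : auxQueue ξ ψ (n+1) ω = ((auxQueue ξ ψ n ω : ℤ) +
      (if 0 < reflWalk ξ n ω then (-1 : ℤ) else (ψ (n + 1) ω : ℤ))).toNat := rfl
  split_ifs at h1 <;> omega

lemma auxQueue_jump (m : ℕ) (ω : Ω) (h : reflWalk ξ m ω = 0) :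
    ψ (m+1) ω ≤ auxQueue ξ ψ (m+1) ω := by
  have h1 : auxQueue ξ ψ (m+1) ω = ((auxQueue ξ ψ m ω : ℤ) +
      (if 0 < reflWalk ξ m ω then (-1 : ℤ) else (ψ (m + 1) ω : ℤ))).toNat := rfl
  rw [h] at h1
  simp only [lt_self_iff_false, if_false] at h1
  omega

lemma auxQueue_lower (m d : ℕ) (ω : Ω) (h : reflWalk ξ m ω = 0) :
    ψ (m+1) ω ≤ auxQueue ξ ψ (m+1+d) ω + d := by
  induction d with
  | zero => simpa using auxQueue_jump ξ ψ m ω h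
  | succ d ih =>
    have := auxQueue_step ξ ψ (m+1+d) ω
    have h2 : m+1+(d+1) = (m+1+d)+1 := by ring
    rw [h2]
    omega

end Walk

section Hit

lemma pS_ivt (u : ℕ → Bool) (j : ℕ) :
    ∀ m : ℕ, pS u m ≤ -(j:ℤ) → ∃ t ≤ m, pS u t = -(j:ℤ) := by
  intro m
  induction m with
  | zero =>
    intro h
    rw [pS_zero] at h
    exact ⟨0, le_rfl, by rw [pS_zero]; omega⟩
  | succ m ih =>
    intro h
    by_cases he : pS u (m+1) = -(j:ℤ)
    · exact ⟨m+1, le_rfl, he⟩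
    · have hb : bval (u m) = 1 ∨ bval (u m) = -1 := by
        cases u m <;> simp [bval]
      have hs := pS_succ u m
      have hm : pS u m ≤ -(j:ℤ) := by omega
      obtain ⟨t, ht, he'⟩ := ih hm
      exact ⟨t, by omega, he'⟩

noncomputable def hitT (u : ℕ → Bool) (j : ℕ) : ℕ := sInf {t | pS u t = -(j:ℤ)}

/-- hitting times of the levels `-j`, `j ≤ c`, all occurring by time `n`. -/
lemma pS_hits (u : ℕ → Bool) (n c : ℕ) (hc : ∃ m ≤ n, pS u m ≤ -(c:ℤ)) :
      (∀ j j', j < j' → j' ≤ c → hitT u j < hitT u j') ∧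
      (∀ j ≤ c, hitT u j ≤ n ∧ pS u (hitT u j) = -(j:ℤ)
        ∧ ∀ k ≤ hitT u j, pS u (hitT u j) ≤ pS u k) := by
  classical
  obtain ⟨m, hmn, hm⟩ := hc
  have hne : ∀ j ≤ c, ∃ t, pS u t = -(j:ℤ) := by
    intro j hj
    obtain ⟨t, _, ht⟩ := pS_ivt u j m (by omega)
    exact ⟨t, ht⟩
  set T : ℕ → ℕ := fun j => sInf {t | pS u t = -(j:ℤ)} with hTdef
  have hTT : ∀ j, hitT u j = T j := fun j => rfl
  have hmemT : ∀ j ≤ c, pS u (T j) = -(j:ℤ) := fun j hj => Nat.sInf_mem (hne j hj)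
  have hleT : ∀ (j : ℕ) (t : ℕ), pS u t = -(j:ℤ) → T j ≤ t := fun j t ht => Nat.sInf_le ht
  simp only [hTT]
  refine ⟨?_, ?_⟩
  · intro j j' hjj' hj'c
    have hmem' : pS u (T j') = -(j':ℤ) := hmemT j' hj'c
    obtain ⟨t'', ht''le, ht''⟩ := pS_ivt u j (T j') (by omega)
    have h1 : T j ≤ t'' := hleT j t'' ht''
    have h2 : t'' ≠ T j' := by
      intro he
      rw [he, hmem'] at ht''
      omega
    omega
  · intro j hj
    have hmem : pS u (T j) = -(j:ℤ) := hmemT j hj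
    obtain ⟨t', ht'm, ht'⟩ := pS_ivt u j m (by omega)
    have h1 : T j ≤ t' := hleT j t' ht'
    refine ⟨by omega, hmem, ?_⟩
    intro k hk
    by_contra hcon
    push_neg at hcon
    rw [hmem] at hcon
    obtain ⟨t'', ht''le, ht''⟩ := pS_ivt u j k (by omega)
    have h2 : T j ≤ t'' := hleT j t'' ht''
    have h3 : t'' = T j := by omega
    have h4 : k = T j := by omega
    rw [h4, hmem] at hcon
    omega

end Hit

section Prob
variable {Ω : Type*} [MeasurableSpace Ω] (μ : Measure Ω) [IsProbabilityMeasure μ]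
variable (ξ : ℕ → Ω → ℤ) (ψ : ℕ → Ω → ℕ)

lemma prob_product
    (hψmeas : ∀ n, Measurable (ψ n))
    (hindep : ProbabilityTheory.iIndepFun
      (Sum.elim (fun n : ℕ => fun ω => ξ (n + 1) ω)
        (fun n : ℕ => fun ω => (ψ (n + 1) ω : ℤ))) μ)
    (hξ : ∀ n, 1 ≤ n → μ {ω | ξ n ω = 1} = 1 / 2 ∧ μ {ω | ξ n ω = -1} = 1 / 2)
    (hψident : ∀ n, 1 ≤ n → μ.map (ψ n) = μ.map (ψ 1))
    (n c T : ℕ) (v : Fin n → Bool) (t : ℕ → ℕ)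
    (htinj : ∀ j j', j < c → j' < c → t j = t j' → j = j') :
    μ ({ω | ∀ k < n, ξ (k+1) ω = bval (extb v k)} ∩ {ω | ∀ j < c, ψ (t j + 1) ω ≤ T})
      = (1/2)^n * (μ {ω | ψ 1 ω ≤ T})^c := by
  classical
  set F := Sum.elim (fun n : ℕ => fun ω => ξ (n + 1) ω)
      (fun n : ℕ => fun ω : Ω => ((ψ (n + 1) ω : ℤ))) with hF
  set S : Finset (ℕ ⊕ ℕ) := ((Finset.range n).image Sum.inl)
      ∪ ((Finset.range c).image (fun j => Sum.inr (t j))) with hS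
  set sets : (ℕ ⊕ ℕ) → Set ℤ :=
      Sum.elim (fun k => {bval (extb v k)}) (fun _ => Set.Iic (T:ℤ)) with hsets
  have hmeas : ∀ i, i ∈ S → MeasurableSet (sets i) := by
    intro i _
    rcases i with k | m
    · exact measurableSet_singleton _
    · exact measurableSet_Iic
  have hprod := hindep.measure_inter_preimage_eq_mul (sets := sets) S hmeas
  have hset : (⋂ i ∈ S, F i ⁻¹' sets i)
      = ({ω | ∀ k < n, ξ (k+1) ω = bval (extb v k)}
        ∩ {ω | ∀ j < c, ψ (t j + 1) ω ≤ T}) := by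
    ext ω
    rw [Set.mem_iInter₂]
    constructor
    · intro H
      constructor
      · intro k hk
        have := H (Sum.inl k) (by
          rw [hS, Finset.mem_union]
          exact Or.inl (Finset.mem_image_of_mem _ (Finset.mem_range.mpr hk)))
        simpa [hF, hsets] using this
      · intro j hj
        have := H (Sum.inr (t j)) (by
          rw [hS, Finset.mem_union]
          exact Or.inr (Finset.mem_image_of_mem _ (Finset.mem_range.mpr hj)))
        simp only [hF, hsets, Set.mem_preimage, Sum.elim_inr, Set.mem_Iic] at this
        exact_mod_cast this
    · intro H i hi
      rw [hS, Finset.mem_union] at hi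
      rcases hi with hi | hi
      · obtain ⟨k, hk, rfl⟩ := Finset.mem_image.mp hi
        have := H.1 k (Finset.mem_range.mp hk)
        simpa [hF, hsets] using this
      · obtain ⟨j, hj, rfl⟩ := Finset.mem_image.mp hi
        have := H.2 j (Finset.mem_range.mp hj)
        simp only [hF, hsets, Set.mem_preimage, Sum.elim_inr, Set.mem_Iic]
        exact_mod_cast this
  have hdisj : Disjoint ((Finset.range n).image Sum.inl)
      ((Finset.range c).image (fun j => Sum.inr (t j))) := by
    rw [Finset.disjoint_left]
    intro a ha ha'
    obtain ⟨k, _, rfl⟩ := Finset.mem_image.mp ha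
    obtain ⟨j, _, h⟩ := Finset.mem_image.mp ha'
    exact absurd h (by simp)
  have hinl : Set.InjOn (Sum.inl : ℕ → ℕ ⊕ ℕ) (Finset.range n : Set ℕ) :=
    fun a _ b _ h => Sum.inl_injective h
  have hinr : Set.InjOn (fun j => Sum.inr (t j) : ℕ → ℕ ⊕ ℕ)
      (Finset.range c : Set ℕ) := by
    intro a ha b hb h
    have := Sum.inr_injective h
    exact htinj a b (by simpa using ha) (by simpa using hb) this
  have hprod2 : ∏ i ∈ S, μ (F i ⁻¹' sets i)
      = (∏ k ∈ Finset.range n, μ (F (Sum.inl k) ⁻¹' sets (Sum.inl k)))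
        * ∏ j ∈ Finset.range c, μ (F (Sum.inr (t j)) ⁻¹' sets (Sum.inr (t j))) := by
    rw [hS, Finset.prod_union hdisj, Finset.prod_image hinl, Finset.prod_image hinr]
  have hfac1 : ∀ k, μ (F (Sum.inl k) ⁻¹' sets (Sum.inl k)) = 1/2 := by
    intro k
    have he : F (Sum.inl k) ⁻¹' sets (Sum.inl k) = {ω | ξ (k+1) ω = bval (extb v k)} := by
      ext ω; simp [hF, hsets]
    rw [he]
    cases hb : extb v k
    · rw [show bval false = -1 from rfl]
      exact (hξ (k+1) (by omega)).2
    · rw [show bval true = 1 from rfl]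
      exact (hξ (k+1) (by omega)).1
  have hfac2 : ∀ m : ℕ, μ (F (Sum.inr m) ⁻¹' sets (Sum.inr m)) = μ {ω | ψ 1 ω ≤ T} := by
    intro m
    have he : F (Sum.inr m) ⁻¹' sets (Sum.inr m) = ψ (m+1) ⁻¹' (Set.Iic T) := by
      ext ω
      simp only [hF, hsets, Set.mem_preimage, Sum.elim_inr, Set.mem_Iic]
      exact ⟨fun h => by exact_mod_cast h, fun h => by exact_mod_cast h⟩
    have hIic : MeasurableSet (Set.Iic T) := measurableSet_Iic
    rw [he, ← Measure.map_apply (hψmeas (m+1)) hIic, hψident (m+1) (by omega),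
      Measure.map_apply (hψmeas 1) hIic]
    congr 1
  rw [hset] at hprod
  rw [hprod, hprod2]
  congr 1
  · rw [Finset.prod_congr rfl (fun k _ => hfac1 k), Finset.prod_const, Finset.card_range]
  · rw [Finset.prod_congr rfl (fun j _ => hfac2 (t j)), Finset.prod_const, Finset.card_range]

lemma prob_atom
    (hψmeas : ∀ n, Measurable (ψ n))
    (hindep : ProbabilityTheory.iIndepFun
      (Sum.elim (fun n : ℕ => fun ω => ξ (n + 1) ω)
        (fun n : ℕ => fun ω => (ψ (n + 1) ω : ℤ))) μ)
    (hξ : ∀ n, 1 ≤ n → μ {ω | ξ n ω = 1} = 1 / 2 ∧ μ {ω | ξ n ω = -1} = 1 / 2)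
    (hψident : ∀ n, 1 ≤ n → μ.map (ψ n) = μ.map (ψ 1))
    (n : ℕ) (v : Fin n → Bool) :
    μ {ω | ∀ k < n, ξ (k+1) ω = bval (extb v k)} = (1/2)^n := by
  have h := prob_product μ ξ ψ hψmeas hindep hξ hψident n 0 0 v (fun _ => 0)
    (fun j j' hj _ _ => absurd hj (Nat.not_lt_zero j))
  simpa using h

lemma measure_null_xi (hξmeas : ∀ n, Measurable (ξ n))
    (hξ : ∀ n, 1 ≤ n → μ {ω | ξ n ω = 1} = 1 / 2 ∧ μ {ω | ξ n ω = -1} = 1 / 2) (k : ℕ) :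
    μ {ω | ¬(ξ (k+1) ω = 1 ∨ ξ (k+1) ω = -1)} = 0 := by
  have hA : MeasurableSet {ω | ξ (k+1) ω = 1} := hξmeas (k+1) (measurableSet_singleton 1)
  have hB : MeasurableSet {ω | ξ (k+1) ω = -1} := hξmeas (k+1) (measurableSet_singleton (-1))
  have hd : Disjoint {ω | ξ (k+1) ω = 1} {ω | ξ (k+1) ω = -1} := by
    rw [Set.disjoint_left]
    intro ω h1 h2
    simp only [Set.mem_setOf_eq] at h1 h2
    omega
  have hu : μ ({ω | ξ (k+1) ω = 1} ∪ {ω | ξ (k+1) ω = -1}) = 1 := by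
    rw [measure_union hd hB, (hξ (k+1) (by omega)).1, (hξ (k+1) (by omega)).2]
    rw [ENNReal.div_add_div_same]
    rw [show (1+1 : ℝ≥0∞) = 2 by norm_num]
    exact ENNReal.div_self two_ne_zero ENNReal.ofNat_ne_top
  have hc : {ω | ¬(ξ (k+1) ω = 1 ∨ ξ (k+1) ω = -1)}
      = ({ω | ξ (k+1) ω = 1} ∪ {ω | ξ (k+1) ω = -1})ᶜ := by
    ext ω; simp [not_or]
  rw [hc, measure_compl (hA.union hB) (measure_ne_top μ _), hu, measure_univ]
  simp

lemma measure_Nev_le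
    (hξmeas : ∀ n, Measurable (ξ n))
    (hψmeas : ∀ n, Measurable (ψ n))
    (hindep : ProbabilityTheory.iIndepFun
      (Sum.elim (fun n : ℕ => fun ω => ξ (n + 1) ω)
        (fun n : ℕ => fun ω => (ψ (n + 1) ω : ℤ))) μ)
    (hξ : ∀ n, 1 ≤ n → μ {ω | ξ n ω = 1} = 1 / 2 ∧ μ {ω | ξ n ω = -1} = 1 / 2)
    (hψident : ∀ n, 1 ≤ n → μ.map (ψ n) = μ.map (ψ 1))
    (n c : ℕ) :
    μ {ω | ∀ m ≤ n, -(c:ℤ) < Sw ξ m ω}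
      ≤ ((Aset n c).card : ℝ≥0∞) * (1/2)^n := by
  classical
  set NullU : Set Ω := ⋃ k : ℕ, {ω | ¬(ξ (k+1) ω = 1 ∨ ξ (k+1) ω = -1)} with hNullU
  have hNull0 : μ NullU = 0 :=
    measure_iUnion_null (fun k => measure_null_xi μ ξ hξmeas hξ k)
  have hsub : {ω | ∀ m ≤ n, -(c:ℤ) < Sw ξ m ω}
      ⊆ NullU ∪ ⋃ v ∈ Aset n c, {ω | ∀ k < n, ξ (k+1) ω = bval (extb v k)} := by
    intro ω hω
    by_cases hn : ω ∈ NullU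
    · exact Or.inl hn
    · right
      have hgood : ∀ k : ℕ, ξ (k+1) ω = 1 ∨ ξ (k+1) ω = -1 := by
        intro k
        by_contra hcon
        exact hn (Set.mem_iUnion.mpr ⟨k, hcon⟩)
      set v : Fin n → Bool := fun k => decide (ξ ((k:ℕ)+1) ω = 1) with hv
      have hAv : ∀ k < n, ξ (k+1) ω = bval (extb v k) := by
        intro k hk
        rw [extb_eq v k hk]
        simp only [hv]
        show ξ (k+1) ω = bval (decide (ξ (k+1) ω = 1))
        rcases hgood k with h | h
        · rw [decide_eq_true h, show bval true = 1 from rfl, h]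
        · have hne : ¬ (ξ (k+1) ω = 1) := by rw [h]; norm_num
          rw [decide_eq_false hne, show bval false = -1 from rfl, h]
      have hpS : ∀ m ≤ n, Sw ξ m ω = pS (extb v) m := by
        intro m hm
        rw [Sw, pS]
        apply Finset.sum_congr rfl
        intro k hk
        have hkm : k < m := Finset.mem_range.mp hk
        exact hAv k (by omega)
      have hvA : v ∈ Aset n c := by
        rw [Aset, Finset.mem_filter]
        refine ⟨Finset.mem_univ _, ?_⟩
        intro m hm
        rw [← hpS m hm]
        exact hω m hm
      refine Set.mem_biUnion hvA ?_
      exact hAv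
  calc μ {ω | ∀ m ≤ n, -(c:ℤ) < Sw ξ m ω}
      ≤ μ (NullU ∪ ⋃ v ∈ Aset n c, {ω | ∀ k < n, ξ (k+1) ω = bval (extb v k)}) :=
        measure_mono hsub
    _ ≤ μ NullU + μ (⋃ v ∈ Aset n c, {ω | ∀ k < n, ξ (k+1) ω = bval (extb v k)}) :=
        measure_union_le _ _
    _ = μ (⋃ v ∈ Aset n c, {ω | ∀ k < n, ξ (k+1) ω = bval (extb v k)}) := by
        rw [hNull0, zero_add]
    _ ≤ ∑ v ∈ Aset n c, μ {ω | ∀ k < n, ξ (k+1) ω = bval (extb v k)} :=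
        measure_biUnion_finset_le _ _
    _ = ∑ _v ∈ Aset n c, (1/2:ℝ≥0∞)^n :=
        Finset.sum_congr rfl (fun v _ => prob_atom μ ξ ψ hψmeas hindep hξ hψident n v)
    _ = ((Aset n c).card : ℝ≥0∞) * (1/2)^n := by
        rw [Finset.sum_const, nsmul_eq_mul]

open Classical in
lemma measure_Bev_le
    (hψmeas : ∀ n, Measurable (ψ n))
    (hindep : ProbabilityTheory.iIndepFun
      (Sum.elim (fun n : ℕ => fun ω => ξ (n + 1) ω)
        (fun n : ℕ => fun ω => (ψ (n + 1) ω : ℤ))) μ)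
    (hξ : ∀ n, 1 ≤ n → μ {ω | ξ n ω = 1} = 1 / 2 ∧ μ {ω | ξ n ω = -1} = 1 / 2)
    (hψident : ∀ n, 1 ≤ n → μ.map (ψ n) = μ.map (ψ 1))
    (n c T : ℕ) :
    μ (⋃ v ∈ Finset.univ.filter
          (fun v : Fin n → Bool => ∃ m ≤ n, pS (extb v) m ≤ -(c:ℤ)),
        ({ω | ∀ k < n, ξ (k+1) ω = bval (extb v k)}
          ∩ {ω | ∀ j < c, ψ (hitT (extb v) j + 1) ω ≤ T}))
      ≤ (μ {ω | ψ 1 ω ≤ T})^c := by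
  classical
  set G := Finset.univ.filter
      (fun v : Fin n → Bool => ∃ m ≤ n, pS (extb v) m ≤ -(c:ℤ)) with hG
  have hle : μ (⋃ v ∈ G, ({ω | ∀ k < n, ξ (k+1) ω = bval (extb v k)}
          ∩ {ω | ∀ j < c, ψ (hitT (extb v) j + 1) ω ≤ T}))
      ≤ ∑ v ∈ G, ((1/2:ℝ≥0∞)^n * (μ {ω | ψ 1 ω ≤ T})^c) := by
    refine le_trans (measure_biUnion_finset_le _ _) (Finset.sum_le_sum ?_)
    intro v hv
    rw [hG, Finset.mem_filter] at hv
    have hhits := pS_hits (extb v) n c hv.2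
    have htinj : ∀ j j', j < c → j' < c → hitT (extb v) j = hitT (extb v) j' → j = j' := by
      intro j j' hj hj' he
      by_contra hne
      rcases Nat.lt_or_ge j j' with h | h
      · have := hhits.1 j j' h (by omega)
        omega
      · have hlt : j' < j := by omega
        have := hhits.1 j' j hlt (by omega)
        omega
    exact le_of_eq (prob_product μ ξ ψ hψmeas hindep hξ hψident n c T v
      (hitT (extb v)) htinj)
  refine le_trans hle ?_
  rw [Finset.sum_const, nsmul_eq_mul]
  have hcard : (G.card : ℝ≥0∞) ≤ 2^n := by
    have h1 : G.card ≤ (Finset.univ : Finset (Fin n → Bool)).card :=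
      Finset.card_le_card (Finset.filter_subset _ _)
    have h2 : (Finset.univ : Finset (Fin n → Bool)).card = 2^n := by
      simp [Finset.card_univ]
    have := h1.trans_eq h2
    exact_mod_cast this
  calc (G.card : ℝ≥0∞) * ((1/2)^n * (μ {ω | ψ 1 ω ≤ T})^c)
      ≤ 2^n * ((1/2)^n * (μ {ω | ψ 1 ω ≤ T})^c) := by
        exact mul_le_mul_left hcard _
    _ = (2^n * (1/2)^n) * (μ {ω | ψ 1 ω ≤ T})^c := by ring
    _ = (μ {ω | ψ 1 ω ≤ T})^c := by
        rw [← mul_pow, show (2 : ℝ≥0∞) * (1/2) = 1 by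
          rw [mul_comm, ENNReal.div_mul_cancel two_ne_zero ENNReal.ofNat_ne_top], one_pow,
          one_mul]

end Prob

section RealEst

lemma two_rpow_nat (k : ℕ) : ((2^k : ℕ) : ℝ) = (2:ℝ)^((k:ℕ):ℝ) := by
  rw [Real.rpow_natCast]
  push_cast
  ring

lemma cb_half_pow (i : ℕ) :
    (Nat.centralBinom (2^i) : ℝ) * (1/2:ℝ)^(2^(i+1)) ≤ (2:ℝ)^(-((i:ℕ):ℝ)/2) := by
  set h : ℕ := 2^i with hh
  set b : ℝ := (Nat.centralBinom h : ℝ) with hb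
  have hb0 : 0 ≤ b := Nat.cast_nonneg _
  have hnat : (Nat.centralBinom h)^2 * (h+1) ≤ 16^h := centralBinom_sq_le h
  have hnat2 : (Nat.centralBinom h)^2 * 2^i ≤ 16^h := by
    refine le_trans ?_ hnat
    have : (2:ℕ)^i ≤ h + 1 := by omega
    exact Nat.mul_le_mul_left _ this
  have key : b^2 * (2:ℝ)^i ≤ (16:ℝ)^h := by rw [hb]; exact_mod_cast hnat2
  have e1 : ((1:ℝ)/2)^(2^(i+1) : ℕ) = ((1/4:ℝ))^h := by
    rw [show (2:ℕ)^(i+1) = 2*h by rw [hh]; ring, pow_mul]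
    norm_num
  rw [e1]
  have hA : (0:ℝ) < 16^h := by positivity
  have hB : (0:ℝ) < (2:ℝ)^i := by positivity
  have hsq : (b*(1/4:ℝ)^h)^2 ≤ ((2:ℝ)^(-((i:ℕ):ℝ)/2))^2 := by
    have hL : (b*(1/4:ℝ)^h)^2 = b^2 * ((1/16:ℝ))^h := by
      rw [mul_pow, pow_right_comm]
      norm_num
    have hR : ((2:ℝ)^(-((i:ℕ):ℝ)/2))^2 = ((2:ℝ)^i)⁻¹ := by
      rw [← Real.rpow_natCast ((2:ℝ)^(-((i:ℕ):ℝ)/2)) 2, ← Real.rpow_mul (by norm_num)]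
      rw [show (-((i:ℕ):ℝ)/2) * ((2:ℕ):ℝ) = -((i:ℕ):ℝ) by push_cast; ring]
      rw [Real.rpow_neg (by norm_num), Real.rpow_natCast]
    rw [hL, hR]
    have h16 : ((1/16:ℝ))^h = ((16:ℝ)^h)⁻¹ := by
      rw [one_div, inv_pow]
    rw [h16, ← div_eq_mul_inv, ← one_div, div_le_div_iff₀ hA hB]
    linarith [key]
  have hx : 0 ≤ b*(1/4:ℝ)^h := by positivity
  have hy : 0 ≤ (2:ℝ)^(-((i:ℕ):ℝ)/2) := Real.rpow_nonneg (by norm_num) _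
  have := Real.sqrt_le_sqrt hsq
  rwa [Real.sqrt_sq hx, Real.sqrt_sq hy] at this

end RealEst

section Build
variable {Ω : Type*} (ξ : ℕ → Ω → ℤ)

lemma build_atom (ω : Ω) (hgood : ∀ k, ξ (k+1) ω = 1 ∨ ξ (k+1) ω = -1) (n : ℕ) :
    ∀ k < n, ξ (k+1) ω
      = bval (extb (fun k : Fin n => decide (ξ ((k:ℕ)+1) ω = 1)) k) := by
  intro k hk
  rw [extb_eq _ k hk]
  show ξ (k+1) ω = bval (decide (ξ (k+1) ω = 1))
  rcases hgood k with h | h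
  · rw [decide_eq_true h, show bval true = 1 from rfl, h]
  · have hne : ¬ (ξ (k+1) ω = 1) := by rw [h]; norm_num
    rw [decide_eq_false hne, show bval false = -1 from rfl, h]

lemma Sw_eq_pS (ω : Ω) (n : ℕ) (v : Fin n → Bool)
    (hAv : ∀ k < n, ξ (k+1) ω = bval (extb v k)) :
    ∀ m ≤ n, Sw ξ m ω = pS (extb v) m := by
  intro m hm
  rw [Sw, pS]
  apply Finset.sum_congr rfl
  intro k hk
  have hkm : k < m := Finset.mem_range.mp hk
  exact hAv k (by omega)

end Build

lemma rpow_pow_helper (x : ℝ) (i : ℕ) : ((2:ℝ)^x)^i = (2:ℝ)^(x*(i:ℝ)) := by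
  rw [← Real.rpow_natCast ((2:ℝ)^x) i, ← Real.rpow_mul (by norm_num)]

end AFSW

set_option maxHeartbeats 2000000 in
open AFSW in
/-- In the counterexample of Adan–Foss–Shneer–Weiss (Remark 2): `X₂` is the reflected
simple random walk started at `0` with i.i.d. fair `±1` steps `ξ(n)`, the `ψ(n)` are
i.i.d. `ℤ₊`-valued with tail `ℙ(ψ(1) > k) ∼ k^{-α}` for some `0 < α < 1/2`, independent
of the `ξ(n)`, and `X₁(n) = max{0, X₁(n-1) + η(n)}` where `η(n) = -1` if `X₂(n-1) > 0`
and `η(n) = ψ(n)` otherwise. Then `X₁(n) → ∞` almost surely. -/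
theorem counterexample_X1_tendsto_infinity
    {Ω : Type*} [MeasurableSpace Ω] (μ : Measure Ω) [IsProbabilityMeasure μ]
    (α : ℝ) (hα0 : 0 < α) (hα : α < 1 / 2)
    (ξ : ℕ → Ω → ℤ) (ψ : ℕ → Ω → ℕ)
    (hξmeas : ∀ n, Measurable (ξ n)) (hψmeas : ∀ n, Measurable (ψ n))
    -- the family `(ξ(n))_{n ≥ 1} ∪ (ψ(n))_{n ≥ 1}` is (mutually) independent:
    (hindep : iIndepFun
      (Sum.elim (fun n : ℕ => fun ω => ξ (n + 1) ω)
        (fun n : ℕ => fun ω => (ψ (n + 1) ω : ℤ))) μ)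
    -- the `ξ(n)`, `n ≥ 1`, are i.i.d. fair `±1` steps:
    (hξ : ∀ n, 1 ≤ n → μ {ω | ξ n ω = 1} = 1 / 2 ∧ μ {ω | ξ n ω = -1} = 1 / 2)
    -- the `ψ(n)`, `n ≥ 1`, are identically distributed:
    (hψident : ∀ n, 1 ≤ n → μ.map (ψ n) = μ.map (ψ 1))
    -- with tail `ℙ(ψ(1) > k) ∼ k^{-α}`:
    (hψtail : Tendsto (fun k : ℕ => (k : ℝ) ^ α * (μ {ω | k < ψ 1 ω}).toReal)
      atTop (𝓝 1)) :
    ∀ᵐ ω ∂μ, Tendsto (fun n => auxQueue ξ ψ n ω) atTop atTop := by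
  classical
  set β : ℝ := α/2 + 1/4 with hβdef
  have hαβ : α < β := by rw [hβdef]; linarith
  have hβ2 : β < 1/2 := by rw [hβdef]; linarith
  have hβpos : 0 < β := by rw [hβdef]; linarith
  have hβle1 : β ≤ 1 := by rw [hβdef]; linarith
  set cc : ℕ → ℕ := fun i => ⌈(2:ℝ)^(β*((i:ℕ)+1:ℝ))⌉₊ with hccdef
  set r₁ : ℝ := (2:ℝ)^(β-1/2) with hr₁def
  set r₂ : ℝ := (2:ℝ)^(α-β) with hr₂def
  have hr₁pos : 0 < r₁ := Real.rpow_pos_of_pos (by norm_num) _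
  have hr₂pos : 0 < r₂ := Real.rpow_pos_of_pos (by norm_num) _
  have hr₁lt : r₁ < 1 := Real.rpow_lt_one_of_one_lt_of_neg (by norm_num) (by linarith)
  have hr₂lt : r₂ < 1 := Real.rpow_lt_one_of_one_lt_of_neg (by norm_num) (by linarith)
  have hcc_ge : ∀ i : ℕ, (2:ℝ)^(β*((i:ℕ)+1:ℝ)) ≤ (cc i : ℝ) := fun i => Nat.le_ceil _
  have hcc_le : ∀ i : ℕ, (cc i : ℝ) ≤ 2*(2:ℝ)^(β*((i:ℕ)+1:ℝ)) := by
    intro i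
    have h1 : ((cc i : ℕ) : ℝ) < (2:ℝ)^(β*((i:ℕ)+1:ℝ)) + 1 :=
      Nat.ceil_lt_add_one (Real.rpow_nonneg (by norm_num) _)
    have h2 : (1:ℝ) ≤ (2:ℝ)^(β*((i:ℕ)+1:ℝ)) :=
      Real.one_le_rpow (by norm_num) (by positivity)
    linarith
  -- the two bad events at scale i
  set Nev : ℕ → Set Ω := fun i => {ω | ∀ m ≤ 2^(i+1), -((cc i):ℤ) < Sw ξ m ω} with hNevdef
  set Bev : ℕ → Set Ω := fun i => ⋃ v ∈ Finset.univ.filter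
      (fun v : Fin (2^(i+1)) → Bool => ∃ m ≤ 2^(i+1), pS (extb v) m ≤ -((cc i):ℤ)),
      ({ω | ∀ k < 2^(i+1), ξ (k+1) ω = bval (extb v k)}
        ∩ {ω | ∀ j < cc i, ψ (hitT (extb v) j + 1) ω ≤ 2^(i+3)}) with hBevdef
  -- bound on μ (Nev i)
  have hNbound : ∀ i : ℕ, μ (Nev i) ≤ ENNReal.ofReal (8*r₁^i) := by
    intro i
    have h1 := measure_Nev_le μ ξ ψ hξmeas hψmeas hindep hξ hψident (2^(i+1)) (cc i)
    have h2 : (Aset (2^(i+1)) (cc i)).card ≤ 2*(cc i)*Nat.centralBinom (2^i) := by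
      have h := card_Aset_le_final (2^i) (cc i)
      rw [show 2*2^i = 2^(i+1) by rw [pow_succ]; ring] at h
      exact h
    have h3 : μ (Nev i) ≤ ((2*(cc i)*Nat.centralBinom (2^i) : ℕ) : ℝ≥0∞)
        * (1/2:ℝ≥0∞)^(2^(i+1)) := by
      refine le_trans h1 (mul_le_mul_left ?_ _)
      exact_mod_cast h2
    refine le_trans h3 ?_
    have hhalf : (1/2 : ℝ≥0∞) = ENNReal.ofReal (1/2:ℝ) := by
      rw [ENNReal.ofReal_div_of_pos (by norm_num)]
      norm_num
    rw [hhalf, ← ENNReal.ofReal_pow (by norm_num), ← ENNReal.ofReal_natCast,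
      ← ENNReal.ofReal_mul (by positivity)]
    apply ENNReal.ofReal_le_ofReal
    -- real estimate
    have hcb := cb_half_pow i
    have e1 : ((2*(cc i)*Nat.centralBinom (2^i) : ℕ) : ℝ)
        = 2*((cc i):ℝ)*((Nat.centralBinom (2^i)):ℝ) := by push_cast; ring
    rw [e1]
    have hccnn : (0:ℝ) ≤ ((cc i):ℝ) := Nat.cast_nonneg _
    calc 2*((cc i):ℝ)*((Nat.centralBinom (2^i)):ℝ) * (1/2:ℝ)^(2^(i+1))
        = 2*((cc i):ℝ)*(((Nat.centralBinom (2^i)):ℝ) * (1/2:ℝ)^(2^(i+1))) := by ring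
      _ ≤ 2*((cc i):ℝ)*((2:ℝ)^(-((i:ℕ):ℝ)/2)) := by
          refine mul_le_mul_of_nonneg_left hcb (by positivity)
      _ ≤ 2*(2*(2:ℝ)^(β*((i:ℕ)+1:ℝ)))*((2:ℝ)^(-((i:ℕ):ℝ)/2)) := by
          have hrp : (0:ℝ) ≤ (2:ℝ)^(-((i:ℕ):ℝ)/2) := Real.rpow_nonneg (by norm_num) _
          nlinarith [hcc_le i, hrp]
      _ = 4*(2:ℝ)^(β*((i:ℕ)+1:ℝ) + (-((i:ℕ):ℝ)/2)) := by
          rw [Real.rpow_add (by norm_num)]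
          ring
      _ = 4*((2:ℝ)^β * (2:ℝ)^((β-1/2)*(i:ℕ))) := by
          rw [← Real.rpow_add (by norm_num)]
          congr 1
          · ring_nf
      _ ≤ 8*r₁^i := by
          rw [hr₁def, rpow_pow_helper]
          have h2b : (2:ℝ)^β ≤ 2 := by
            calc (2:ℝ)^β ≤ (2:ℝ)^(1:ℝ) :=
              Real.rpow_le_rpow_of_exponent_le (by norm_num) hβle1
            _ = 2 := Real.rpow_one 2
          have hrp : (0:ℝ) ≤ (2:ℝ)^((β-1/2)*(i:ℕ)) := Real.rpow_nonneg (by norm_num) _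
          nlinarith [h2b, hrp]
  -- tail estimate
  obtain ⟨K, hK⟩ : ∃ K : ℕ, ∀ k ≥ K, 1/2 ≤ (k:ℝ)^α * (μ {ω | k < ψ 1 ω}).toReal :=
    Filter.eventually_atTop.mp (hψtail.eventually (eventually_ge_nhds (by norm_num)))
  -- bound on μ (Bev i) for large i
  have hBbound : ∀ i : ℕ, K ≤ i → μ (Bev i) ≤ ENNReal.ofReal (8*r₂^i) := by
    intro i hiK
    have h1 := measure_Bev_le μ ξ ψ hψmeas hindep hξ hψident (2^(i+1)) (cc i) (2^(i+3))
    refine le_trans h1 ?_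
    -- express q as ofReal
    set p : ℝ := (μ {ω | 2^(i+3) < ψ 1 ω}).toReal with hpdef
    have hple : μ {ω | 2^(i+3) < ψ 1 ω} ≤ 1 := prob_le_one
    have hqc : {ω | ψ 1 ω ≤ 2^(i+3)} = {ω | 2^(i+3) < ψ 1 ω}ᶜ := by
      ext ω; simp [not_lt]
    have hmp : MeasurableSet {ω | 2^(i+3) < ψ 1 ω} := by
      have : {ω | 2^(i+3) < ψ 1 ω} = ψ 1 ⁻¹' (Set.Ioi (2^(i+3))) := rfl
      rw [this]
      exact hψmeas 1 measurableSet_Ioi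
    have hq1 : μ {ω | ψ 1 ω ≤ 2^(i+3)} = 1 - μ {ω | 2^(i+3) < ψ 1 ω} := by
      rw [hqc, measure_compl hmp (measure_ne_top μ _), measure_univ]
    have hq2 : μ {ω | ψ 1 ω ≤ 2^(i+3)} = ENNReal.ofReal (1 - p) := by
      rw [hq1, show (μ {ω | 2^(i+3) < ψ 1 ω}) = ENNReal.ofReal p from
        (ENNReal.ofReal_toReal (measure_ne_top μ _)).symm]
      rw [← ENNReal.ofReal_one, ← ENNReal.ofReal_sub _ ENNReal.toReal_nonneg]
    have hp1 : p ≤ 1 := ENNReal.toReal_le_of_le_ofReal (by norm_num) (by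
      rw [ENNReal.ofReal_one]; exact hple)
    rw [hq2, ← ENNReal.ofReal_pow (by linarith)]
    apply ENNReal.ofReal_le_ofReal
    -- lower bound on p
    have hKT : K ≤ 2^(i+3) := by
      have h1 : i < 2^i := Nat.lt_two_pow_self
      have h2 : (2:ℕ)^i ≤ 2^(i+3) := Nat.pow_le_pow_right (by norm_num) (by omega)
      omega
    have hKp := hK (2^(i+3)) hKT
    have hTpos : (0:ℝ) < (((2^(i+3):ℕ)):ℝ)^α := by
      apply Real.rpow_pos_of_pos
      positivity
    have hplow : (1/2)/((((2^(i+3):ℕ)):ℝ)^α) ≤ p := by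
      rw [div_le_iff₀ hTpos]
      calc (1:ℝ)/2 ≤ (((2^(i+3):ℕ)):ℝ)^α * p := hKp
        _ = p * (((2^(i+3):ℕ)):ℝ)^α := by ring
    have hTα : ((((2^(i+3):ℕ)):ℝ))^α = (2:ℝ)^(α*(((i:ℕ):ℝ)+3)) := by
      rw [two_rpow_nat (i+3), ← Real.rpow_mul (by norm_num)]
      congr 1
      push_cast
      ring
    -- combine with cc
    have hccp : (2:ℝ)^(β*((i:ℕ)+1:ℝ)) ≤ (cc i : ℝ) := hcc_ge i
    have hpos2 : (0:ℝ) < (2:ℝ)^(β*((i:ℕ)+1:ℝ)) := Real.rpow_pos_of_pos (by norm_num) _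
    have hppos : 0 < p := by
      have : (0:ℝ) < (1/2)/((((2^(i+3):ℕ)):ℝ)^α) := by positivity
      linarith
    have hpc : (1/4) * (2:ℝ)^((β-α)*(i:ℕ)) ≤ p * (cc i : ℝ) := by
      have e2 : (1/2)/((((2^(i+3):ℕ)):ℝ)^α) * (2:ℝ)^(β*((i:ℕ)+1:ℝ))
          = (1/2) * (2:ℝ)^(β*((i:ℕ)+1:ℝ) - α*(((i:ℕ):ℝ)+3)) := by
        rw [hTα, Real.rpow_sub (by norm_num)]
        ring
      have e3 : (β*((i:ℕ)+1:ℝ) - α*(((i:ℕ):ℝ)+3)) = (β-α)*(i:ℕ) + (β - 3*α) := by ring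
      have e4 : (2:ℝ)^((β-α)*(i:ℕ) + (β - 3*α))
          = (2:ℝ)^((β-α)*(i:ℕ)) * (2:ℝ)^(β-3*α) := Real.rpow_add (by norm_num) _ _
      have e5 : (2:ℝ)^(-1:ℝ) ≤ (2:ℝ)^(β-3*α) :=
        Real.rpow_le_rpow_of_exponent_le (by norm_num) (by linarith)
      have e6 : (2:ℝ)^(-1:ℝ) = 1/2 := by
        rw [Real.rpow_neg_one]
        norm_num
      have hstep : (1/2)/((((2^(i+3):ℕ)):ℝ)^α) * (2:ℝ)^(β*((i:ℕ)+1:ℝ)) ≤ p * (cc i : ℝ) := by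
        apply mul_le_mul hplow hccp (le_of_lt hpos2) (le_of_lt hppos)
      rw [e2, e3, e4] at hstep
      have hrpnn : (0:ℝ) ≤ (2:ℝ)^((β-α)*(i:ℕ)) := Real.rpow_nonneg (by norm_num) _
      have e8 : (1/2:ℝ) ≤ (2:ℝ)^(β-3*α) := by rw [← e6]; exact e5
      have e9 := mul_le_mul_of_nonneg_left e8 hrpnn
      linarith [hstep, e9]
    -- (1-p)^c ≤ exp(-(p*c)) ≤ 1/(p*c) ≤ 8 r₂^i
    have hexp1 : (1-p)^(cc i) ≤ Real.exp (-(p * (cc i:ℝ))) := by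
      have h1 : 1 - p ≤ Real.exp (-p) := by
        have := Real.add_one_le_exp (-p)
        linarith
      calc (1-p)^(cc i) ≤ (Real.exp (-p))^(cc i) := by
            apply pow_le_pow_left₀ (by linarith) h1
        _ = Real.exp (-(p * (cc i:ℝ))) := by
            rw [← Real.exp_nat_mul]
            congr 1
            ring
    have hexp2 : Real.exp (-(p * (cc i:ℝ))) ≤ 1/(p * (cc i:ℝ)) := by
      have hpc0 : 0 < p * (cc i:ℝ) := by
        have : (0:ℝ) < (1/4) * (2:ℝ)^((β-α)*(i:ℕ)) := by positivity
        linarith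
      rw [Real.exp_neg]
      rw [inv_eq_one_div, div_le_div_iff₀ (Real.exp_pos _) hpc0]
      have := Real.add_one_le_exp (p * (cc i:ℝ))
      nlinarith [this, hpc0]
    have hfinal : 1/(p * (cc i:ℝ)) ≤ 8*r₂^i := by
      have hpc0 : (0:ℝ) < (1/4) * (2:ℝ)^((β-α)*(i:ℕ)) := by positivity
      have h2 : 1/(p * (cc i:ℝ)) ≤ 1/((1/4) * (2:ℝ)^((β-α)*(i:ℕ))) := by
        apply one_div_le_one_div_of_le hpc0 hpc
      refine le_trans h2 ?_
      rw [hr₂def, rpow_pow_helper]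
      have e7 : (2:ℝ)^((α-β)*(i:ℕ)) = ((2:ℝ)^((β-α)*(i:ℕ)))⁻¹ := by
        rw [← Real.rpow_neg (by norm_num)]
        congr 1
        ring
      rw [e7]
      rw [one_div, mul_inv]
      have : ((1:ℝ)/4)⁻¹ = 4 := by norm_num
      rw [this]
      have hrp : (0:ℝ) < ((2:ℝ)^((β-α)*(i:ℕ)))⁻¹ := by positivity
      nlinarith [hrp]
    calc (1-p)^(cc i) ≤ Real.exp (-(p * (cc i:ℝ))) := hexp1
      _ ≤ 1/(p * (cc i:ℝ)) := hexp2
      _ ≤ 8*r₂^i := hfinal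
  -- summability and Borel--Cantelli
  have hgsum : Summable (fun i : ℕ => 8*r₁^i + 8*r₂^i) := by
    apply Summable.add
    · exact (summable_geometric_of_lt_one (le_of_lt hr₁pos) hr₁lt).mul_left 8
    · exact (summable_geometric_of_lt_one (le_of_lt hr₂pos) hr₂lt).mul_left 8
  set bad : ℕ → Set Ω := fun j => Nev (j+K) ∪ Bev (j+K) with hbaddef
  have hbadsum : (∑' j, μ (bad j)) ≠ ⊤ := by
    have hle : ∀ j : ℕ, μ (bad j) ≤ ENNReal.ofReal (8*r₁^(j+K) + 8*r₂^(j+K)) := by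
      intro j
      calc μ (bad j) ≤ μ (Nev (j+K)) + μ (Bev (j+K)) := measure_union_le _ _
        _ ≤ ENNReal.ofReal (8*r₁^(j+K)) + ENNReal.ofReal (8*r₂^(j+K)) := by
            exact add_le_add (hNbound (j+K)) (hBbound (j+K) (by omega))
        _ = ENNReal.ofReal (8*r₁^(j+K) + 8*r₂^(j+K)) := by
            rw [ENNReal.ofReal_add (by positivity) (by positivity)]
    have hsum2 : Summable (fun j : ℕ => 8*r₁^(j+K) + 8*r₂^(j+K)) := by
      exact (summable_nat_add_iff K).mpr hgsum
    have hlt : (∑' j, μ (bad j)) < ⊤ := by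
      calc (∑' j, μ (bad j)) ≤ ∑' j, ENNReal.ofReal (8*r₁^(j+K) + 8*r₂^(j+K)) :=
            ENNReal.tsum_le_tsum hle
        _ = ENNReal.ofReal (∑' j, (8*r₁^(j+K) + 8*r₂^(j+K))) :=
            (ENNReal.ofReal_tsum_of_nonneg (fun j => by positivity) hsum2).symm
        _ < ⊤ := ENNReal.ofReal_lt_top
    exact hlt.ne
  have hBC := MeasureTheory.ae_finite_setOf_mem hbadsum
  have hae1 : ∀ᵐ ω ∂μ, ∀ k : ℕ, ξ (k+1) ω = 1 ∨ ξ (k+1) ω = -1 := by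
    rw [MeasureTheory.ae_all_iff]
    intro k
    have h0 := measure_null_xi μ ξ hξmeas hξ k
    rw [MeasureTheory.ae_iff]
    exact h0
  filter_upwards [hae1, hBC] with ω hgood hfin
  obtain ⟨J, hJ⟩ : ∃ J : ℕ, ∀ j, J ≤ j → ω ∉ bad j := by
    obtain ⟨J0, hJ0⟩ := hfin.bddAbove
    refine ⟨J0+1, fun j hj hmem => ?_⟩
    have := hJ0 hmem
    omega
  have hmain : ∀ n', 2^(J+K+1) ≤ n' → n' ≤ auxQueue ξ ψ n' ω := by
    intro n' hn'
    set l := Nat.log 2 n' with hldef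
    have hn'pos : n' ≠ 0 := by
      have h1 : 1 ≤ (2:ℕ)^(J+K+1) := Nat.one_le_two_pow
      omega
    have hlow : 2^l ≤ n' := Nat.pow_log_le_self 2 hn'pos
    have hhigh : n' < 2^(l+1) := Nat.lt_pow_succ_log_self (by norm_num) n'
    have hJKl : J+K+1 ≤ l := by
      have h1 : (2:ℕ)^(J+K+1) < 2^(l+1) := lt_of_le_of_lt hn' hhigh
      have h2 := (Nat.pow_lt_pow_iff_right (by norm_num : 1 < 2)).mp h1
      omega
    set i := l - 1 with hidef
    have hil : i + 1 = l := by omega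
    have hiJK : J + K ≤ i := by omega
    have hnb : ω ∉ bad (i - K) := hJ (i-K) (by omega)
    rw [hbaddef] at hnb
    simp only [Set.mem_union, not_or] at hnb
    have hik : (i - K) + K = i := by omega
    rw [hik] at hnb
    obtain ⟨hnotN, hnotB⟩ := hnb
    have hexm : ∃ m ≤ 2^(i+1), Sw ξ m ω ≤ -((cc i):ℤ) := by
      by_contra hcon
      push_neg at hcon
      apply hnotN
      rw [hNevdef]
      intro m hm
      exact hcon m hm
    set v : Fin (2^(i+1)) → Bool := fun k => decide (ξ ((k:ℕ)+1) ω = 1) with hvdef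
    have hAv : ∀ k < 2^(i+1), ξ (k+1) ω = bval (extb v k) := build_atom ξ ω hgood (2^(i+1))
    have hpS : ∀ m ≤ 2^(i+1), Sw ξ m ω = pS (extb v) m := Sw_eq_pS ξ ω (2^(i+1)) v hAv
    obtain ⟨m, hm, hmval⟩ := hexm
    have hvG : v ∈ Finset.univ.filter
        (fun v : Fin (2^(i+1)) → Bool => ∃ m ≤ 2^(i+1), pS (extb v) m ≤ -((cc i):ℤ)) := by
      rw [Finset.mem_filter]
      exact ⟨Finset.mem_univ _, ⟨m, hm, by rw [← hpS m hm]; exact hmval⟩⟩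
    have hhits := pS_hits (extb v) (2^(i+1)) (cc i) ⟨m, hm, by rw [← hpS m hm]; exact hmval⟩
    have hjump : ∃ j < cc i, 2^(i+3) < ψ (hitT (extb v) j + 1) ω := by
      by_contra hcon
      push_neg at hcon
      apply hnotB
      rw [hBevdef]
      refine Set.mem_biUnion hvG ?_
      exact ⟨hAv, fun j hj => hcon j hj⟩
    obtain ⟨j, hjc, hbig⟩ := hjump
    set m₀ := hitT (extb v) j with hm₀def
    have hm₀lt : m₀ < hitT (extb v) (cc i) := hhits.1 j (cc i) hjc le_rfl
    have hm₀n : m₀ + 1 ≤ 2^(i+1) := by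
      have := (hhits.2 (cc i) le_rfl).1
      omega
    have hmin := (hhits.2 j (le_of_lt hjc)).2.2
    have hrw0 : reflWalk ξ m₀ ω = 0 := by
      apply reflWalk_eq_zero_of_min
      intro k hk
      rw [hpS m₀ (by omega), hpS k (by omega)]
      exact hmin k hk
    have hlower := auxQueue_lower ξ ψ m₀ (n' - (m₀+1)) ω hrw0
    have h2l : (2:ℕ)^(i+1) ≤ n' := by rw [hil]; exact hlow
    have heq : m₀ + 1 + (n' - (m₀+1)) = n' := by omega
    rw [heq] at hlower
    have h2h : n' < 2^(i+2) := by
      have he : i + 2 = l + 1 := by omega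
      rw [he]; exact hhigh
    have hT4 : (2:ℕ)^(i+3) = 2 * 2^(i+2) := by rw [pow_succ]; ring
    omega
  exact Filter.tendsto_atTop_mono' Filter.atTop
    (Filter.eventually_atTop.mpr ⟨2^(J+K+1), hmain⟩) Filter.tendsto_id
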